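/- arXiv:2304.11847 — 2 statements merged into one kernel-verified Lean document; each statement's English description precedes it below -/
import Mathlib

section
/- Let d, N ≥ 1, let f be a non-negative continuous 2π-periodic function on [−π,π]^d, and let g be any continuous 2π-periodic function on [−π,π]^d. Writing g⁻ = max(−g, 0), it holds that ‖ℐ^N(g⁻)‖₂ ≤ 2 ( ‖f − ℐ^N f‖₂ + ‖f − ℐ^N g‖₂ ). -/
open MeasureTheory Real Finset
open scoped BigOperators

noncomputable section

/-- The frequency set `𝒩^d = {-N,…,N}^d`. -/
def freq (d N : ℕ) : Finset (Fin d → ℤ) :=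
  Fintype.piFinset fun _ => Finset.Icc (-(N : ℤ)) (N : ℤ)

/-- The dot product `k · x` of a frequency and a point. -/
def dotP {d : ℕ} (k : Fin d → ℤ) (x : Fin d → ℝ) : ℝ := ∑ j, (k j : ℝ) * x j

/-- The cube `[-π, π]^d`. -/
def cube (d : ℕ) : Set (Fin d → ℝ) := Set.univ.pi fun _ => Set.Icc (-π) π

/-- The collocation points `x_k = 2πk/(2N+1)`. -/
def colloc (d N : ℕ) (k : Fin d → ℤ) : Fin d → ℝ := fun j => 2 * π * (k j : ℝ) / (2 * N + 1)

/-- The space `S^N` of real trigonometric polynomials with frequencies in `𝒩^d`. -/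
def SN (d N : ℕ) : Set ((Fin d → ℝ) → ℝ) :=
  {f | ∃ c : (Fin d → ℤ) → ℂ, ∀ x, (f x : ℂ) =
    ∑ k ∈ freq d N, c k * Complex.exp (Complex.I * (dotP k x : ℂ))}

/-- The `L²` norm on `[-π,π]^d`. -/
def L2 (d : ℕ) (f : (Fin d → ℝ) → ℝ) : ℝ := Real.sqrt (∫ x in cube d, (f x) ^ 2)

/-- Fourier coefficient `ĝ_k`. -/
def fcoef (d : ℕ) (g : (Fin d → ℝ) → ℝ) (k : Fin d → ℤ) : ℂ :=
  (1 / (2 * π) ^ d : ℂ) * ∫ x in cube d, (g x : ℂ) * Complex.exp (-Complex.I * (dotP k x : ℂ))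

/-- The truncated Fourier series (L² orthogonal projection onto `S^N`). -/
def projN (d N : ℕ) (g : (Fin d → ℝ) → ℝ) : (Fin d → ℝ) → ℝ := fun x =>
  (∑ k ∈ freq d N, fcoef d g k * Complex.exp (Complex.I * (dotP k x : ℂ))).re

/-- Trigonometric interpolation at the collocation points: the unique element of `S^N`
agreeing with `g` at all `x_k`, given by the discrete Fourier transform. -/
def interpN (d N : ℕ) (g : (Fin d → ℝ) → ℝ) : (Fin d → ℝ) → ℝ := fun x =>
  (∑ k ∈ freq d N,
      ((1 / (2 * (N : ℂ) + 1) ^ d) *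
        ∑ j ∈ freq d N, (g (colloc d N j) : ℂ) *
          Complex.exp (-Complex.I * (dotP k (colloc d N j) : ℂ))) *
      Complex.exp (Complex.I * (dotP k x : ℂ))).re

/-- The moments `ρ(f) = ∫ m(x) f(x) dx`. -/
def rho {d M : ℕ} (m : Fin M → MvPolynomial (Fin d) ℝ) (f : (Fin d → ℝ) → ℝ) : Fin M → ℝ :=
  fun j => ∫ x in cube d, MvPolynomial.eval x (m j) * f x

/-- `g` is the moment-preserving projection `Π^N f`. -/
def IsMomentMin (d N : ℕ) {M : ℕ} (m : Fin M → MvPolynomial (Fin d) ℝ)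
    (f g : (Fin d → ℝ) → ℝ) : Prop :=
  g ∈ SN d N ∧ rho m g = rho m f ∧
  ∀ h ∈ SN d N, rho m h = rho m f → L2 d (fun x => g x - f x) ≤ L2 d (fun x => h x - f x)

/-- `g` is the positive and moment-preserving projection `Π₊^N f`. -/
def IsPosMomentMin (d N : ℕ) {M : ℕ} (m : Fin M → MvPolynomial (Fin d) ℝ)
    (f g : (Fin d → ℝ) → ℝ) : Prop :=
  g ∈ SN d N ∧ (∀ k ∈ freq d N, 0 ≤ g (colloc d N k)) ∧ rho m g = rho m f ∧
  ∀ h ∈ SN d N, (∀ k ∈ freq d N, 0 ≤ h (colloc d N k)) → rho m h = rho m f →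
    L2 d (fun x => g x - f x) ≤ L2 d (fun x => h x - f x)

lemma exp_I_int_pi (m : ℤ) : Complex.exp (Complex.I * m * π) = (-1) ^ m := by
  have : Complex.I * m * π = m * (π * Complex.I) := by ring
  rw [this, Complex.exp_int_mul, Complex.exp_pi_mul_I]

lemma int1d (m : ℤ) :
    ∫ t in Set.Icc (-π) π, Complex.exp (Complex.I * m * t) =
      if m = 0 then (2 * π : ℂ) else 0 := by
  have h1 : ∫ t in Set.Icc (-π) π, Complex.exp (Complex.I * m * t)
      = ∫ t in (-π)..π, Complex.exp (Complex.I * m * t) := by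
    rw [intervalIntegral.integral_of_le (by linarith [pi_pos] : -π ≤ π),
      MeasureTheory.integral_Icc_eq_integral_Ioc]
  rw [h1]
  by_cases hm : m = 0
  · simp [hm]; ring_nf
  · rw [if_neg hm]
    have hc : (Complex.I * m) ≠ 0 := by
      simp [Complex.I_ne_zero, Complex.ext_iff]
      exact_mod_cast hm
    have h2 : ∀ t : ℝ, Complex.I * m * t = (Complex.I * m) * t := fun t => by ring
    rw [integral_exp_mul_complex hc]
    have ha : Complex.I * ↑m * ↑(-π : ℝ) = -(Complex.I * m * π) := by push_cast; ring
    have hb : (Complex.I * ↑m * (π:ℝ) : ℂ) = Complex.I * m * π := by norm_num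
    rw [ha, hb, exp_I_int_pi, Complex.exp_neg, exp_I_int_pi]
    have : ((-1 : ℂ) ^ m)⁻¹ = (-1) ^ m := by
      rw [← zpow_neg]
      rcases Int.even_or_odd m with he | ho
      · rw [he.neg.neg_one_zpow, he.neg_one_zpow]
      · rw [ho.neg.neg_one_zpow, ho.neg_one_zpow]
    rw [this]; ring


lemma measurableSet_cube (d : ℕ) : MeasurableSet (cube d) :=
  MeasurableSet.univ_pi fun _ => measurableSet_Icc

lemma cube_prod_integral {d : ℕ} (F : Fin d → ℝ → ℂ) :
    ∫ x in cube d, ∏ i, F i (x i) = ∏ i, ∫ t in Set.Icc (-π) π, F i t := by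
  rw [← MeasureTheory.integral_indicator (measurableSet_cube d)]
  have : (cube d).indicator (fun x => ∏ i, F i (x i)) =
      fun x => ∏ i, (Set.Icc (-π) π).indicator (F i) (x i) := by
    funext x
    by_cases hx : x ∈ cube d
    · rw [Set.indicator_of_mem hx]
      refine Finset.prod_congr rfl fun i _ => ?_
      rw [Set.indicator_of_mem (hx i (Set.mem_univ i))]
    · rw [Set.indicator_of_notMem hx]
      simp only [cube, Set.mem_pi, Set.mem_univ, forall_true_left, not_forall] at hx
      obtain ⟨i, hi⟩ := hx
      exact (Finset.prod_eq_zero (Finset.mem_univ i)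
        (by rw [Set.indicator_of_notMem hi])).symm
  rw [this, MeasureTheory.integral_fintype_prod_volume_eq_prod]
  refine Finset.prod_congr rfl fun i _ => ?_
  rw [MeasureTheory.integral_indicator measurableSet_Icc]


lemma exp_dotP {d : ℕ} (m : Fin d → ℤ) (x : Fin d → ℝ) :
    Complex.exp (Complex.I * (dotP m x : ℝ)) = ∏ j, Complex.exp (Complex.I * (m j) * (x j)) := by
  rw [← Complex.exp_sum]
  congr 1
  unfold dotP
  push_cast
  rw [Finset.mul_sum]
  exact Finset.sum_congr rfl fun j _ => by ring

lemma cube_exp_integral (d : ℕ) (m : Fin d → ℤ) :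
    ∫ x in cube d, Complex.exp (Complex.I * (dotP m x : ℝ)) =
      if m = 0 then ((2 * π : ℂ) ^ d) else 0 := by
  have : ∀ x, Complex.exp (Complex.I * (dotP m x : ℝ)) =
      ∏ j, Complex.exp (Complex.I * (m j) * (x j)) := fun x => exp_dotP m x
  simp_rw [this]
  rw [cube_prod_integral (fun j t => Complex.exp (Complex.I * (m j) * t))]
  have : ∀ j : Fin d, (∫ t in Set.Icc (-π) π, Complex.exp (Complex.I * (m j) * t)) =
      if m j = 0 then (2 * π : ℂ) else 0 := fun j => int1d (m j)
  simp_rw [this]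
  by_cases hm : m = 0
  · subst hm; simp
  · rw [if_neg hm]
    obtain ⟨j, hj⟩ : ∃ j, m j ≠ 0 := by
      by_contra h; push_neg at h; exact hm (funext h)
    exact Finset.prod_eq_zero (Finset.mem_univ j) (by rw [if_neg hj])

lemma continuous_expdot {d : ℕ} (k : Fin d → ℤ) :
    Continuous fun x : Fin d → ℝ => Complex.exp (Complex.I * (dotP k x : ℝ)) := by
  apply Complex.continuous_exp.comp
  apply Continuous.mul continuous_const
  apply Complex.continuous_ofReal.comp
  unfold dotP
  exact continuous_finset_sum _ fun j _ => (continuous_const.mul (continuous_apply j))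

lemma isCompact_cube (d : ℕ) : IsCompact (cube d) :=
  isCompact_univ_pi fun _ => isCompact_Icc

lemma integrableOn_expdot {d : ℕ} (k : Fin d → ℤ) :
    IntegrableOn (fun x : Fin d → ℝ => Complex.exp (Complex.I * (dotP k x : ℝ))) (cube d) :=
  (continuous_expdot k).continuousOn.integrableOn_compact (isCompact_cube d)

lemma dotP_sub {d : ℕ} (k k' : Fin d → ℤ) (x : Fin d → ℝ) :
    dotP (k - k') x = dotP k x - dotP k' x := by
  unfold dotP
  rw [← Finset.sum_sub_distrib]
  refine Finset.sum_congr rfl fun j _ => ?_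
  push_cast [Pi.sub_apply]
  ring

lemma conj_term {d : ℕ} (k : Fin d → ℤ) (x : Fin d → ℝ) (z : ℂ) :
    (starRingEnd ℂ) (z * Complex.exp (Complex.I * (dotP k x : ℝ))) =
      (starRingEnd ℂ) z * Complex.exp (-(Complex.I * (dotP k x : ℝ))) := by
  rw [map_mul, ← Complex.exp_conj]
  congr 2
  simp [Complex.ext_iff]

lemma orth_sum {d : ℕ} (K : Finset (Fin d → ℤ)) (a : (Fin d → ℤ) → ℂ) :
    ∫ x in cube d, (∑ k ∈ K, a k * Complex.exp (Complex.I * (dotP k x : ℝ))) *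
      (starRingEnd ℂ) (∑ k ∈ K, a k * Complex.exp (Complex.I * (dotP k x : ℝ))) =
    (2 * π : ℂ) ^ d * ∑ k ∈ K, (Complex.normSq (a k) : ℂ) := by
  have expand : ∀ x : Fin d → ℝ,
      (∑ k ∈ K, a k * Complex.exp (Complex.I * (dotP k x : ℝ))) *
        (starRingEnd ℂ) (∑ k ∈ K, a k * Complex.exp (Complex.I * (dotP k x : ℝ))) =
      ∑ p ∈ K ×ˢ K, (a p.1 * (starRingEnd ℂ) (a p.2)) *
        Complex.exp (Complex.I * (dotP (p.1 - p.2) x : ℝ)) := by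
    intro x
    rw [map_sum, Finset.sum_mul_sum, ← Finset.sum_product']
    refine Finset.sum_congr rfl fun p _ => ?_
    rw [conj_term, dotP_sub]
    push_cast
    rw [mul_mul_mul_comm, ← Complex.exp_add]
    congr 2
    ring
  simp_rw [expand]
  rw [MeasureTheory.integral_finset_sum]
  · have : ∀ p ∈ K ×ˢ K, (∫ x in cube d, (a p.1 * (starRingEnd ℂ) (a p.2)) *
        Complex.exp (Complex.I * (dotP (p.1 - p.2) x : ℝ))) =
        (a p.1 * (starRingEnd ℂ) (a p.2)) * (if p.1 = p.2 then (2 * π : ℂ) ^ d else 0) := by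
      intro p _
      rw [MeasureTheory.integral_const_mul, cube_exp_integral]
      congr 1
      simp [sub_eq_zero]
    rw [Finset.sum_congr rfl this, Finset.sum_product]
    have : ∀ k ∈ K, (∑ k' ∈ K, (a k * (starRingEnd ℂ) (a k')) *
        (if k = k' then (2 * π : ℂ) ^ d else 0)) =
        (2 * π : ℂ) ^ d * (Complex.normSq (a k) : ℂ) := by
      intro k hk
      rw [Finset.sum_eq_single k]
      · rw [if_pos rfl, Complex.mul_conj]; ring
      · intro k' _ hne; rw [if_neg (Ne.symm hne), mul_zero]
      · intro h; exact absurd hk h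
    rw [Finset.sum_congr rfl this, ← Finset.mul_sum]
  · intro p _
    exact (integrableOn_expdot (p.1 - p.2)).const_mul _

lemma Icc_map_range (N : ℕ) :
    Finset.Icc (-(N:ℤ)) N =
      (Finset.range (2 * N + 1)).map ⟨fun i : ℕ => (i : ℤ) - N, fun a b h => by
        have h2 : (a : ℤ) = b := by linarith [sub_left_injective.eq_iff.mp h]
        exact_mod_cast h2⟩ := by
  ext a
  simp only [Finset.mem_Icc, Finset.mem_map, Finset.mem_range, Function.Embedding.coeFn_mk]
  constructor
  · rintro ⟨h1, h2⟩; exact ⟨(a + N).toNat, by omega, by show ((a + N).toNat : ℤ) - N = a; omega⟩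
  · rintro ⟨i, hi, rfl⟩; show -(N:ℤ) ≤ (i:ℤ) - N ∧ (i:ℤ) - N ≤ N; omega

lemma geom_zpow_sum (N : ℕ) (ω : ℂ) (h0 : ω ≠ 0) (h1 : ω ≠ 1) (hroot : ω ^ (2 * N + 1) = 1) :
    ∑ a ∈ Finset.Icc (-(N:ℤ)) N, ω ^ a = 0 := by
  rw [Icc_map_range, Finset.sum_map]
  show ∑ i ∈ Finset.range (2 * N + 1), ω ^ ((i : ℤ) - N) = 0
  have key : ∀ i : ℕ, ω ^ ((i : ℤ) - N) = ω ^ (-(N:ℤ)) * ω ^ i := by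
    intro i
    rw [sub_eq_neg_add, zpow_add₀ h0, zpow_natCast]
  simp_rw [key]
  rw [← Finset.mul_sum, geom_sum_eq h1, hroot, sub_self, zero_div, mul_zero]

lemma disc1d (N : ℕ) (m : ℤ) (hm : m.natAbs ≤ 2 * N) :
    ∑ a ∈ Finset.Icc (-(N:ℤ)) N,
        Complex.exp (Complex.I * a * ((2 * π * m / (2 * N + 1) : ℝ) : ℂ)) =
      if m = 0 then ((2 * N + 1 : ℕ) : ℂ) else 0 := by
  by_cases hm0 : m = 0
  · subst hm0
    simp only [if_pos rfl]
    have : ∀ a ∈ Finset.Icc (-(N:ℤ)) N,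
        Complex.exp (Complex.I * a * ((2 * π * (0:ℤ) / (2 * N + 1) : ℝ) : ℂ)) = 1 := by
      intro a _; norm_num
    rw [Finset.sum_congr rfl this, Finset.sum_const, Int.card_Icc]
    push_cast
    have : (N : ℤ) + 1 - -(N:ℤ) = ((2 * N + 1 : ℕ) : ℤ) := by push_cast; ring
    rw [this, Int.toNat_natCast]
    push_cast; ring
  · rw [if_neg hm0]
    set c : ℝ := 2 * π * m / (2 * N + 1) with hc
    set ω : ℂ := Complex.exp ((c : ℂ) * Complex.I) with hω
    have hterm : ∀ a : ℤ, Complex.exp (Complex.I * a * (c : ℂ)) = ω ^ a := by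
      intro a
      rw [hω, ← Complex.exp_int_mul]
      congr 1; push_cast; ring
    simp_rw [hterm]
    apply geom_zpow_sum
    · exact Complex.exp_ne_zero _
    · rw [hω]
      intro hone
      rw [Complex.exp_eq_one_iff] at hone
      obtain ⟨n, hn⟩ := hone
      have hI : (c : ℂ) = n * (2 * π) := by
        have h' : (c : ℂ) * Complex.I = ((n : ℂ) * (2 * π)) * Complex.I := by rw [hn]; ring
        exact mul_right_cancel₀ Complex.I_ne_zero h'
      have hcr : c = n * (2 * π) := by exact_mod_cast hI
      rw [hc] at hcr
      have h2N : (2 * (N:ℝ) + 1) ≠ 0 := by positivity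
      have hmn : (m : ℝ) = n * (2 * (N:ℝ) + 1) := by
        field_simp at hcr
        have hπ : (π : ℝ) ≠ 0 := Real.pi_ne_zero
        nlinarith [hcr, Real.pi_pos]
      have hmz : m = n * (2 * N + 1) := by exact_mod_cast hmn
      rcases eq_or_ne n 0 with h | h
      · rw [h] at hmz; simp at hmz; exact hm0 hmz
      · have h1 : 1 ≤ |n| := Int.one_le_abs h
        have habs : (2 * (N:ℤ) + 1) ≤ |m| := by
          rw [hmz, abs_mul, abs_of_nonneg (by positivity : (0:ℤ) ≤ 2 * (N:ℤ) + 1)]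
          nlinarith
        rw [Int.abs_eq_natAbs] at habs
        omega
    · rw [hω, ← Complex.exp_nat_mul]
      have hr : ((2 * N + 1 : ℕ) : ℝ) * c = 2 * π * m := by
        rw [hc]
        have hne : (2 * (N:ℝ) + 1) ≠ 0 := by positivity
        push_cast
        field_simp
      have key : ((2 * N + 1 : ℕ) : ℂ) * ((c:ℂ) * Complex.I) = m * (2 * π * Complex.I) :=
        calc ((2 * N + 1 : ℕ) : ℂ) * ((c:ℂ) * Complex.I)
            = ((((2 * N + 1 : ℕ) : ℝ) * c : ℝ) : ℂ) * Complex.I := by push_cast; ring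
          _ = ((2 * π * (m:ℝ) : ℝ) : ℂ) * Complex.I := by rw [hr]
          _ = m * (2 * π * Complex.I) := by push_cast; ring
      rw [key, Complex.exp_int_mul_two_pi_mul_I]





/-- The DFT coefficients used in `interpN`. -/
def dftc (d N : ℕ) (g : (Fin d → ℝ) → ℝ) (k : Fin d → ℤ) : ℂ :=
  (1 / (2 * (N : ℂ) + 1) ^ d) *
    ∑ j ∈ freq d N, (g (colloc d N j) : ℂ) *
      Complex.exp (-Complex.I * (dotP k (colloc d N j) : ℂ))

lemma interpN_eq (d N : ℕ) (g : (Fin d → ℝ) → ℝ) (x : Fin d → ℝ) :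
    interpN d N g x =
      (∑ k ∈ freq d N, dftc d N g k * Complex.exp (Complex.I * (dotP k x : ℂ))).re := rfl

lemma disc_orth (d N : ℕ) (m : Fin d → ℤ) (hm : ∀ t, (m t).natAbs ≤ 2 * N) :
    ∑ k ∈ freq d N, Complex.exp (Complex.I * (dotP k (colloc d N m) : ℝ)) =
      if m = 0 then ((2 * N + 1 : ℕ) : ℂ) ^ d else 0 := by
  have h1 : ∀ k : Fin d → ℤ, Complex.exp (Complex.I * (dotP k (colloc d N m) : ℝ)) =
      ∏ t, Complex.exp (Complex.I * (k t) * ((2 * π * (m t : ℝ) / (2 * N + 1) : ℝ) : ℂ)) := by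
    intro k
    rw [exp_dotP]
    rfl
  simp_rw [h1]
  rw [freq, ← Finset.prod_univ_sum (fun _ => Finset.Icc (-(N:ℤ)) N)
    (fun t a => Complex.exp (Complex.I * a * ((2 * π * (m t : ℝ) / (2 * N + 1) : ℝ) : ℂ)))]
  have h2 : ∀ t : Fin d, (∑ a ∈ Finset.Icc (-(N:ℤ)) N,
      Complex.exp (Complex.I * a * ((2 * π * (m t : ℝ) / (2 * N + 1) : ℝ) : ℂ))) =
      if m t = 0 then ((2 * N + 1 : ℕ) : ℂ) else 0 := fun t => disc1d N (m t) (hm t)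
  rw [Finset.prod_congr rfl fun t _ => h2 t]
  by_cases hmz : m = 0
  · subst hmz; simp
  · rw [if_neg hmz]
    obtain ⟨t, ht⟩ : ∃ t, m t ≠ 0 := by
      by_contra h; push_neg at h; exact hmz (funext h)
    exact Finset.prod_eq_zero (Finset.mem_univ t) (by rw [if_neg ht])

lemma colloc_sub (d N : ℕ) (a b : Fin d → ℤ) :
    colloc d N (a - b) = colloc d N a - colloc d N b := by
  funext t
  simp only [colloc, Pi.sub_apply]
  push_cast
  ring

lemma dotP_x_sub {d : ℕ} (k : Fin d → ℤ) (x y : Fin d → ℝ) :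
    dotP k (x - y) = dotP k x - dotP k y := by
  unfold dotP
  rw [← Finset.sum_sub_distrib]
  exact Finset.sum_congr rfl fun j _ => by simp [Pi.sub_apply]; ring

lemma natAbs_sub_le_freq {N : ℕ} {a b : ℤ} (ha : a ∈ Finset.Icc (-(N:ℤ)) N)
    (hb : b ∈ Finset.Icc (-(N:ℤ)) N) : (a - b).natAbs ≤ 2 * N := by
  simp only [Finset.mem_Icc] at ha hb
  omega

lemma parseval_disc (d N : ℕ) (g : (Fin d → ℝ) → ℝ) :
    ∑ k ∈ freq d N, (Complex.normSq (dftc d N g k) : ℂ) =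
      (1 / ((2 * N + 1 : ℕ) : ℂ) ^ d) * ∑ j ∈ freq d N, ((g (colloc d N j) : ℂ)) ^ 2 := by
  have hA : (2 * (N : ℂ) + 1) = ((2 * N + 1 : ℕ) : ℂ) := by push_cast; ring
  have hAne : ((2 * N + 1 : ℕ) : ℂ) ≠ 0 := Nat.cast_ne_zero.mpr (by omega)
  have key : ∀ k ∈ freq d N, (Complex.normSq (dftc d N g k) : ℂ) =
      (1 / ((2 * N + 1 : ℕ) : ℂ) ^ (2 * d)) *
        ∑ p ∈ freq d N ×ˢ freq d N, (g (colloc d N p.1) : ℂ) * (g (colloc d N p.2) : ℂ) *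
          Complex.exp (Complex.I * (dotP k (colloc d N (p.2 - p.1)) : ℝ)) := by
    intro k _
    rw [← Complex.mul_conj]
    unfold dftc
    rw [map_mul, map_sum]
    have hconjA : (starRingEnd ℂ) (1 / (2 * (N : ℂ) + 1) ^ d) = 1 / (2 * (N : ℂ) + 1) ^ d := by
      rw [map_div₀, map_one, map_pow]
      congr 2
      simp [Complex.ext_iff]
    rw [hconjA]
    have hconjterm : ∀ j ∈ freq d N, (starRingEnd ℂ)
        ((g (colloc d N j) : ℂ) * Complex.exp (-Complex.I * (dotP k (colloc d N j) : ℝ))) =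
        (g (colloc d N j) : ℂ) * Complex.exp (Complex.I * (dotP k (colloc d N j) : ℝ)) := by
      intro j _
      rw [map_mul, Complex.conj_ofReal, ← Complex.exp_conj]
      congr 2
      simp [Complex.ext_iff]
    rw [Finset.sum_congr rfl hconjterm]
    set S1 := ∑ j ∈ freq d N, (g (colloc d N j) : ℂ) *
      Complex.exp (-Complex.I * (dotP k (colloc d N j) : ℝ)) with hS1
    set S2 := ∑ j ∈ freq d N, (g (colloc d N j) : ℂ) *
      Complex.exp (Complex.I * (dotP k (colloc d N j) : ℝ)) with hS2
    have h12 : S1 * S2 = ∑ p ∈ freq d N ×ˢ freq d N,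
        (g (colloc d N p.1) : ℂ) * (g (colloc d N p.2) : ℂ) *
          Complex.exp (Complex.I * (dotP k (colloc d N (p.2 - p.1)) : ℝ)) := by
      rw [hS1, hS2, Finset.sum_mul_sum, ← Finset.sum_product']
      refine Finset.sum_congr rfl fun p _ => ?_
      rw [colloc_sub, dotP_x_sub]
      push_cast
      rw [mul_mul_mul_comm, ← Complex.exp_add]
      congr 2
      ring
    calc (1 / (2 * (N:ℂ) + 1) ^ d * S1) * (1 / (2 * (N:ℂ) + 1) ^ d * S2)
        = (1 / (2 * (N:ℂ) + 1) ^ d * (1 / (2 * (N:ℂ) + 1) ^ d)) * (S1 * S2) := by ring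
      _ = (1 / ((2 * N + 1 : ℕ) : ℂ) ^ (2 * d)) * (S1 * S2) := by
          rw [hA, div_mul_div_comm, one_mul, ← pow_add, show 2 * d = d + d from two_mul d]
      _ = _ := by rw [h12]
  rw [Finset.sum_congr rfl key, ← Finset.mul_sum, Finset.sum_comm]
  have inner : ∀ p ∈ freq d N ×ˢ freq d N,
      (∑ k ∈ freq d N, (g (colloc d N p.1) : ℂ) * (g (colloc d N p.2) : ℂ) *
        Complex.exp (Complex.I * (dotP k (colloc d N (p.2 - p.1)) : ℝ))) =
      (g (colloc d N p.1) : ℂ) * (g (colloc d N p.2) : ℂ) *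
        (if p.2 = p.1 then ((2 * N + 1 : ℕ) : ℂ) ^ d else 0) := by
    intro p hp
    rw [← Finset.mul_sum]
    congr 1
    rw [disc_orth]
    · congr 1
      simp [sub_eq_zero]
    · intro t
      simp only [Finset.mem_product, freq, Fintype.mem_piFinset] at hp
      exact natAbs_sub_le_freq (hp.2 t) (hp.1 t)
  rw [Finset.sum_congr rfl inner, Finset.sum_product]
  have diag : ∀ j ∈ freq d N, (∑ j' ∈ freq d N, (g (colloc d N j) : ℂ) * (g (colloc d N j') : ℂ) *
      (if j' = j then ((2 * N + 1 : ℕ) : ℂ) ^ d else 0)) =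
      ((2 * N + 1 : ℕ) : ℂ) ^ d * (g (colloc d N j) : ℂ) ^ 2 := by
    intro j hj
    rw [Finset.sum_eq_single j]
    · rw [if_pos rfl]; ring
    · intro j' _ hne; rw [if_neg hne, mul_zero]
    · intro h; exact absurd hj h
  rw [Finset.sum_congr rfl diag, ← Finset.mul_sum, ← mul_assoc]
  congr 1
  rw [show 2 * d = d + d from two_mul d, pow_add]
  field_simp

lemma freq_neg {d N : ℕ} {k : Fin d → ℤ} (hk : k ∈ freq d N) : -k ∈ freq d N := by
  simp only [freq, Fintype.mem_piFinset, Finset.mem_Icc] at hk ⊢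
  intro t
  have := hk t
  constructor <;> simp only [Pi.neg_apply] <;> omega

lemma dotP_neg {d : ℕ} (k : Fin d → ℤ) (x : Fin d → ℝ) : dotP (-k) x = -dotP k x := by
  unfold dotP
  rw [← Finset.sum_neg_distrib]
  exact Finset.sum_congr rfl fun j _ => by simp

lemma dftc_conj (d N : ℕ) (g : (Fin d → ℝ) → ℝ) (k : Fin d → ℤ) :
    (starRingEnd ℂ) (dftc d N g k) = dftc d N g (-k) := by
  unfold dftc
  rw [map_mul, map_sum]
  congr 1
  · rw [map_div₀, map_one, map_pow]
    congr 2
    simp [Complex.ext_iff]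
  · refine Finset.sum_congr rfl fun j _ => ?_
    rw [map_mul, Complex.conj_ofReal, ← Complex.exp_conj]
    congr 1
    rw [dotP_neg]
    push_cast
    simp [Complex.ext_iff]

lemma S_real (d N : ℕ) (g : (Fin d → ℝ) → ℝ) (x : Fin d → ℝ) :
    (∑ k ∈ freq d N, dftc d N g k * Complex.exp (Complex.I * (dotP k x : ℝ))).im = 0 := by
  rw [← Complex.conj_eq_iff_im]
  rw [map_sum]
  rw [show (∑ k ∈ freq d N, dftc d N g k * Complex.exp (Complex.I * (dotP k x : ℝ))) =
      ∑ k ∈ freq d N, dftc d N g (-k) * Complex.exp (Complex.I * (dotP (-k) x : ℝ)) from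
    (Finset.sum_nbij' (fun k => -k) (fun k => -k)
      (fun k hk => freq_neg hk) (fun k hk => freq_neg hk)
      (fun k _ => neg_neg k) (fun k _ => neg_neg k)
      (fun k _ => rfl)).symm]
  refine Finset.sum_congr rfl fun k _ => ?_
  rw [map_mul, dftc_conj, ← Complex.exp_conj]
  congr 1
  rw [dotP_neg]
  push_cast
  simp [Complex.ext_iff]

lemma continuous_interp_sum (d N : ℕ) (g : (Fin d → ℝ) → ℝ) :
    Continuous fun x : Fin d → ℝ =>
      ∑ k ∈ freq d N, dftc d N g k * Complex.exp (Complex.I * (dotP k x : ℝ)) :=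
  continuous_finset_sum _ fun k _ => continuous_const.mul (continuous_expdot k)

lemma integral_interp_sq (d N : ℕ) (g : (Fin d → ℝ) → ℝ) :
    ∫ x in cube d, (interpN d N g x) ^ 2 =
      (2 * π) ^ d / ((2 * N + 1 : ℕ) : ℝ) ^ d * ∑ j ∈ freq d N, (g (colloc d N j)) ^ 2 := by
  set S : (Fin d → ℝ) → ℂ := fun x =>
    ∑ k ∈ freq d N, dftc d N g k * Complex.exp (Complex.I * (dotP k x : ℝ)) with hS
  have hre : ∀ x, (interpN d N g x) ^ 2 = (S x * (starRingEnd ℂ) (S x)).re := by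
    intro x
    rw [Complex.mul_conj]
    rw [Complex.ofReal_re]
    rw [interpN_eq, Complex.normSq_apply, S_real]
    ring
  simp_rw [hre]
  have hint : IntegrableOn (fun x => S x * (starRingEnd ℂ) (S x)) (cube d) :=
    ((continuous_interp_sum d N g).mul
      (Complex.continuous_conj.comp (continuous_interp_sum d N g))).continuousOn.integrableOn_compact
      (isCompact_cube d)
  have hintre := integral_re (𝕜 := ℂ) hint
  simp only [RCLike.re_to_complex] at hintre
  rw [hintre, hS]
  rw [orth_sum (freq d N) (dftc d N g)]
  rw [parseval_disc d N g]
  have : ((2:ℂ) * π) ^ d * ((1 / ((2 * N + 1 : ℕ) : ℂ) ^ d) *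
      ∑ j ∈ freq d N, ((g (colloc d N j) : ℂ)) ^ 2) =
      (((2 * π) ^ d / ((2 * N + 1 : ℕ) : ℝ) ^ d *
        ∑ j ∈ freq d N, (g (colloc d N j)) ^ 2 : ℝ) : ℂ) := by
    push_cast
    ring
  rw [← mul_assoc, mul_assoc, this, Complex.ofReal_re]

lemma integrableOn_cube {d : ℕ} {u : (Fin d → ℝ) → ℝ} (hu : Continuous u) :
    IntegrableOn u (cube d) :=
  hu.continuousOn.integrableOn_compact (isCompact_cube d)

instance cube_finite (d : ℕ) : IsFiniteMeasure (volume.restrict (cube d)) :=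
  ⟨by rw [Measure.restrict_apply_univ]; exact (isCompact_cube d).measure_lt_top⟩

lemma memLp_two_cube {d : ℕ} {u : (Fin d → ℝ) → ℝ} (hu : Continuous u) :
    MemLp (fun x => |u x|) (ENNReal.ofReal 2) (volume.restrict (cube d)) := by
  obtain ⟨C, hC⟩ := (isCompact_cube d).exists_bound_of_continuousOn hu.continuousOn
  refine MemLp.of_bound (hu.abs.aestronglyMeasurable) C ?_
  filter_upwards [MeasureTheory.ae_restrict_mem (measurableSet_cube d)] with x hx
  simpa [abs_abs] using hC x hx

lemma integral_mul_le_cs {d : ℕ} {u v : (Fin d → ℝ) → ℝ} (hu : Continuous u)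
    (hv : Continuous v) :
    ∫ x in cube d, u x * v x ≤
      Real.sqrt (∫ x in cube d, u x ^ 2) * Real.sqrt (∫ x in cube d, v x ^ 2) := by
  have h1 : ∫ x in cube d, u x * v x ≤ ∫ x in cube d, |u x| * |v x| := by
    apply MeasureTheory.integral_mono (integrableOn_cube (hu.mul hv))
      (integrableOn_cube (hu.abs.mul hv.abs))
    intro x
    calc u x * v x ≤ |u x * v x| := le_abs_self _
      _ = |u x| * |v x| := abs_mul _ _
  have h2 := MeasureTheory.integral_mul_le_Lp_mul_Lq_of_nonneg
    (Real.HolderConjugate.two_two : Real.HolderConjugate 2 2) (μ := volume.restrict (cube d))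
    (f := fun x => |u x|) (g := fun x => |v x|)
    (Filter.Eventually.of_forall fun x => abs_nonneg _)
    (Filter.Eventually.of_forall fun x => abs_nonneg _)
    (memLp_two_cube hu) (memLp_two_cube hv)
  have hconv : ∀ w : (Fin d → ℝ) → ℝ, (∫ x in cube d, |w x| ^ (2:ℝ)) ^ ((1:ℝ)/2) =
      Real.sqrt (∫ x in cube d, w x ^ 2) := by
    intro w
    rw [Real.sqrt_eq_rpow]
    congr 1
    refine MeasureTheory.integral_congr_ae (Filter.Eventually.of_forall fun x => ?_)
    show |w x| ^ (2:ℝ) = w x ^ 2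
    rw [show ((2:ℝ)) = ((2:ℕ):ℝ) by norm_num, Real.rpow_natCast, sq_abs]
  rw [hconv u, hconv v] at h2
  exact h1.trans h2

lemma L2_add_le (d : ℕ) {u v : (Fin d → ℝ) → ℝ} (hu : Continuous u) (hv : Continuous v) :
    L2 d (fun x => u x + v x) ≤ L2 d u + L2 d v := by
  unfold L2
  set a := ∫ x in cube d, u x ^ 2 with hadef
  set b := ∫ x in cube d, v x ^ 2 with hbdef
  have ha : 0 ≤ a := MeasureTheory.integral_nonneg fun x => sq_nonneg _
  have hb : 0 ≤ b := MeasureTheory.integral_nonneg fun x => sq_nonneg _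
  have hexp : (∫ x in cube d, (u x + v x) ^ 2) =
      a + 2 * (∫ x in cube d, u x * v x) + b := by
    have hI1 : Integrable (fun x => u x ^ 2) (volume.restrict (cube d)) :=
      integrableOn_cube (hu.pow 2)
    have hI2 : Integrable (fun x => v x ^ 2) (volume.restrict (cube d)) :=
      integrableOn_cube (hv.pow 2)
    have hI3 : Integrable (fun x => 2 * (u x * v x)) (volume.restrict (cube d)) :=
      (integrableOn_cube (hu.mul hv)).const_mul 2
    have hI12 : Integrable (fun x => u x ^ 2 + 2 * (u x * v x)) (volume.restrict (cube d)) :=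
      hI1.add hI3
    calc ∫ x in cube d, (u x + v x) ^ 2
        = ∫ x in cube d, (u x ^ 2 + 2 * (u x * v x)) + v x ^ 2 :=
          MeasureTheory.integral_congr_ae (Filter.Eventually.of_forall fun x => by ring)
      _ = (∫ x in cube d, u x ^ 2 + 2 * (u x * v x)) + ∫ x in cube d, v x ^ 2 :=
          MeasureTheory.integral_add hI12 hI2
      _ = ((∫ x in cube d, u x ^ 2) + ∫ x in cube d, 2 * (u x * v x)) + ∫ x in cube d, v x ^ 2 := by
          rw [MeasureTheory.integral_add hI1 hI3]
      _ = a + 2 * (∫ x in cube d, u x * v x) + b := by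
          rw [MeasureTheory.integral_const_mul]
  have hcs := integral_mul_le_cs hu hv
  have hle : (∫ x in cube d, (u x + v x) ^ 2) ≤ (Real.sqrt a + Real.sqrt b) ^ 2 := by
    rw [hexp, add_sq, Real.sq_sqrt ha, Real.sq_sqrt hb]
    nlinarith [hcs]
  calc Real.sqrt (∫ x in cube d, (u x + v x) ^ 2) ≤
        Real.sqrt ((Real.sqrt a + Real.sqrt b) ^ 2) := Real.sqrt_le_sqrt hle
    _ = Real.sqrt a + Real.sqrt b :=
        Real.sqrt_sq (by positivity)

lemma interpN_sub (d N : ℕ) (f g : (Fin d → ℝ) → ℝ) (x : Fin d → ℝ) :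
    interpN d N (fun y => f y - g y) x = interpN d N f x - interpN d N g x := by
  rw [interpN_eq, interpN_eq, interpN_eq, ← Complex.sub_re, ← Finset.sum_sub_distrib]
  congr 1
  refine Finset.sum_congr rfl fun k _ => ?_
  rw [← sub_mul]
  congr 1
  unfold dftc
  rw [← mul_sub, ← Finset.sum_sub_distrib]
  congr 1
  refine Finset.sum_congr rfl fun j _ => ?_
  rw [← sub_mul]
  congr 1
  push_cast
  ring

lemma continuous_interpN (d N : ℕ) (g : (Fin d → ℝ) → ℝ) :
    Continuous (interpN d N g) :=
  Complex.continuous_re.comp (continuous_interp_sum d N g)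

lemma L2_neg (d : ℕ) (u : (Fin d → ℝ) → ℝ) : L2 d (fun x => -(u x)) = L2 d u := by
  unfold L2
  congr 1
  refine MeasureTheory.integral_congr_ae (Filter.Eventually.of_forall fun x => ?_)
  simp [neg_sq]


/-- **Lemma 4.2.** Control of the interpolated negative part: for nonnegative continuous
periodic `f` and any continuous periodic `g`,
`‖ℐ^N(g⁻)‖₂ ≤ 2 (‖f − ℐ^N f‖₂ + ‖f − ℐ^N g‖₂)`. -/
theorem interp_negative_part_bound
    (d N : ℕ) (hd : 1 ≤ d) (hN : 1 ≤ N)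
    (f g : (Fin d → ℝ) → ℝ)
    (hfcont : Continuous f) (hgcont : Continuous g)
    (hfper : ∀ (x : Fin d → ℝ) (k : Fin d → ℤ), f (fun i => x i + 2 * π * (k i : ℝ)) = f x)
    (hgper : ∀ (x : Fin d → ℝ) (k : Fin d → ℤ), g (fun i => x i + 2 * π * (k i : ℝ)) = g x)
    (hfpos : ∀ x, 0 ≤ f x) :
    L2 d (interpN d N (fun x => max (-(g x)) 0)) ≤
      2 * (L2 d (fun x => f x - interpN d N f x) + L2 d (fun x => f x - interpN d N g x)) := by
  set gm : (Fin d → ℝ) → ℝ := fun x => max (-(g x)) 0 with hgm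
  set w : (Fin d → ℝ) → ℝ := fun x => f x - g x with hw
  -- Step A : nodal comparison
  have hnode : ∀ y : Fin d → ℝ, gm y ^ 2 ≤ w y ^ 2 := by
    intro y
    rcases le_or_gt (g y) 0 with h | h
    · rw [hgm]
      simp only
      rw [max_eq_left (by linarith : (0:ℝ) ≤ -(g y))]
      have hf := hfpos y
      rw [hw]
      simp only
      nlinarith
    · rw [hgm]
      simp only
      rw [max_eq_right (by linarith : -(g y) ≤ (0:ℝ))]
      simpa using sq_nonneg (w y)
  have hC : (0:ℝ) ≤ (2 * π) ^ d / ((2 * N + 1 : ℕ) : ℝ) ^ d := by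
    have := pi_pos
    positivity
  have hstepA : L2 d (interpN d N gm) ≤ L2 d (interpN d N w) := by
    unfold L2
    rw [integral_interp_sq, integral_interp_sq]
    apply Real.sqrt_le_sqrt
    apply mul_le_mul_of_nonneg_left _ hC
    exact Finset.sum_le_sum fun j _ => hnode _
  -- Step B : linearity
  have hstepB : L2 d (interpN d N w) = L2 d (fun x => interpN d N f x - interpN d N g x) := by
    congr 1
    funext x
    exact interpN_sub d N f g x
  -- Step C : triangle inequality
  have hstepC : L2 d (fun x => interpN d N f x - interpN d N g x) ≤
      L2 d (fun x => f x - interpN d N f x) + L2 d (fun x => f x - interpN d N g x) := by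
    have hcont1 : Continuous fun x => -(f x - interpN d N f x) :=
      (hfcont.sub (continuous_interpN d N f)).neg
    have hcont2 : Continuous fun x => f x - interpN d N g x :=
      hfcont.sub (continuous_interpN d N g)
    have heq : (fun x => interpN d N f x - interpN d N g x) =
        fun x => -(f x - interpN d N f x) + (f x - interpN d N g x) := by
      funext x; ring
    rw [heq]
    calc L2 d (fun x => -(f x - interpN d N f x) + (f x - interpN d N g x)) ≤
        L2 d (fun x => -(f x - interpN d N f x)) + L2 d (fun x => f x - interpN d N g x) :=
          L2_add_le d hcont1 hcont2
      _ = _ := by rw [L2_neg d (fun x => f x - interpN d N f x)]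
  have h1 : (0:ℝ) ≤ L2 d (fun x => f x - interpN d N f x) := Real.sqrt_nonneg _
  have h2 : (0:ℝ) ≤ L2 d (fun x => f x - interpN d N g x) := Real.sqrt_nonneg _
  calc L2 d (interpN d N gm) ≤ L2 d (interpN d N w) := hstepA
    _ = _ := hstepB
    _ ≤ L2 d (fun x => f x - interpN d N f x) + L2 d (fun x => f x - interpN d N g x) := hstepC
    _ ≤ 2 * (L2 d (fun x => f x - interpN d N f x) + L2 d (fun x => f x - interpN d N g x)) := by
        linarith

end
end

section
/- Let C be a real n×p matrix and f ∈ ℝⁿ, and suppose h* ∈ ℝᵖ minimizes the Euclidean norm ‖h‖₂ over the feasible set { h ∈ ℝᵖ : (C h + f)_k ≥ 0 for all k }. Let 𝒜 = { k : (C h* + f)_k = 0 } be the active set, suppose (C h* + f)_k > 0 for all k ∉ 𝒜, write C_𝒜 for the submatrix of C consisting of the rows indexed by 𝒜 and f_𝒜 for the corresponding subvector of f, and assume C_𝒜 has full row rank. Then, with f_𝒜⁺ = max(f_𝒜, 0) and f_𝒜⁻ = max(−f_𝒜, 0) taken componentwise, ‖f_𝒜⁺‖₂ ≤ ‖C_𝒜‖₂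 ‖C_𝒜ᵀ‖₂ ‖(C_𝒜 C_𝒜ᵀ)^{−1}‖₂ ‖f_𝒜⁻‖₂, where ‖·‖₂ on matrices is the spectral norm. -/
open scoped BigOperators Matrix

noncomputable section

/-- The Euclidean norm of a finitely-indexed real vector. -/
def evnorm {ι : Type*} [Fintype ι] (v : ι → ℝ) : ℝ := Real.sqrt (∑ i, v i ^ 2)

/-- The spectral norm (Euclidean operator norm) of a real matrix. -/
def specNorm {ι κ : Type*} [Fintype ι] [Fintype κ] (A : Matrix ι κ ℝ) : ℝ :=
  sInf {c : ℝ | 0 ≤ c ∧ ∀ v : κ → ℝ, evnorm (A.mulVec v) ≤ c * evnorm v}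

namespace SpecAux

open Matrix Finset

lemma evnorm_nonneg' {ι : Type*} [Fintype ι] (v : ι → ℝ) : 0 ≤ evnorm v := Real.sqrt_nonneg _

lemma evnorm_sq {ι : Type*} [Fintype ι] (v : ι → ℝ) : evnorm v ^ 2 = ∑ i, v i ^ 2 :=
  Real.sq_sqrt (Finset.sum_nonneg fun _ _ => sq_nonneg _)

lemma dot_le_evnorm {ι : Type*} [Fintype ι] (u v : ι → ℝ) :
    u ⬝ᵥ v ≤ evnorm u * evnorm v := by
  have h := Finset.sum_mul_sq_le_sq_mul_sq Finset.univ u v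
  have h1 : (u ⬝ᵥ v) ^ 2 ≤ (evnorm u * evnorm v) ^ 2 := by
    rw [mul_pow, evnorm_sq, evnorm_sq]; exact h
  have h2 : 0 ≤ evnorm u * evnorm v := mul_nonneg (evnorm_nonneg' u) (evnorm_nonneg' v)
  nlinarith

lemma specNorm_set_nonempty {ι κ : Type*} [Fintype ι] [Fintype κ] (A : Matrix ι κ ℝ) :
    Set.Nonempty {c : ℝ | 0 ≤ c ∧ ∀ v : κ → ℝ, evnorm (A.mulVec v) ≤ c * evnorm v} := by
  refine ⟨Real.sqrt (∑ i, ∑ j, A i j ^ 2), Real.sqrt_nonneg _, fun v => ?_⟩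
  unfold evnorm
  rw [← Real.sqrt_mul (Finset.sum_nonneg fun i _ => Finset.sum_nonneg fun j _ => sq_nonneg (A i j))]
  apply Real.sqrt_le_sqrt
  rw [Finset.sum_mul]
  apply Finset.sum_le_sum
  intro i _
  have := Finset.sum_mul_sq_le_sq_mul_sq Finset.univ (fun j => A i j) v
  simpa [Matrix.mulVec, dotProduct] using this

lemma specNorm_nonneg {ι κ : Type*} [Fintype ι] [Fintype κ] (A : Matrix ι κ ℝ) :
    0 ≤ specNorm A :=
  le_csInf (specNorm_set_nonempty A) fun _ hc => hc.1

lemma evnorm_eq_zero {ι : Type*} [Fintype ι] {v : ι → ℝ} (h : evnorm v = 0) : v = 0 := by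
  have hs : (∑ i, v i ^ 2) = 0 := by
    have := Real.sqrt_eq_zero (Finset.sum_nonneg fun _ _ => sq_nonneg _) |>.1 h
    exact this
  funext i
  have := (Finset.sum_eq_zero_iff_of_nonneg (fun _ _ => sq_nonneg (v _))).1 hs i (Finset.mem_univ i)
  exact pow_eq_zero_iff (n := 2) (by norm_num) |>.1 this

lemma evnorm_mulVec_le {ι κ : Type*} [Fintype ι] [Fintype κ] (A : Matrix ι κ ℝ) (v : κ → ℝ) :
    evnorm (A.mulVec v) ≤ specNorm A * evnorm v := by
  rcases eq_or_lt_of_le (evnorm_nonneg' v) with h | h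
  · have hv : v = 0 := evnorm_eq_zero h.symm
    subst hv
    simp only [Matrix.mulVec_zero, ← h, mul_zero]
    have : evnorm (0 : ι → ℝ) = 0 := by simp [evnorm]
    simp [this]
  · rw [← div_le_iff₀ h]
    refine le_csInf (specNorm_set_nonempty A) fun c hc => ?_
    exact (div_le_iff₀ h).2 (hc.2 v)

lemma specNorm_mul_le {ι κ μ : Type*} [Fintype ι] [Fintype κ] [Fintype μ]
    (A : Matrix ι κ ℝ) (B : Matrix κ μ ℝ) :
    specNorm (A * B) ≤ specNorm A * specNorm B := by
  apply csInf_le ⟨0, fun c hc => hc.1⟩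
  refine ⟨mul_nonneg (specNorm_nonneg A) (specNorm_nonneg B), fun v => ?_⟩
  rw [← Matrix.mulVec_mulVec]
  calc evnorm (A.mulVec (B.mulVec v)) ≤ specNorm A * evnorm (B.mulVec v) :=
        evnorm_mulVec_le A _
    _ ≤ specNorm A * (specNorm B * evnorm v) :=
        mul_le_mul_of_nonneg_left (evnorm_mulVec_le B v) (specNorm_nonneg A)
    _ = specNorm A * specNorm B * evnorm v := by ring

end SpecAux

open Matrix Finset SpecAux in
/-- **Section 4.1 (key estimate).** For the minimum-norm point `h*` of the polyhedron
`{h : C h + f ≥ 0}` with active set `𝒜` whose rows are linearly independent, the positive part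
of `f_𝒜` is controlled by its negative part:
`‖f_𝒜⁺‖₂ ≤ ‖C_𝒜‖₂ ‖C_𝒜ᵀ‖₂ ‖(C_𝒜 C_𝒜ᵀ)⁻¹‖₂ ‖f_𝒜⁻‖₂`. -/
theorem active_positive_part_bound
    (n p : ℕ) (C : Matrix (Fin n) (Fin p) ℝ) (f : Fin n → ℝ)
    (hstar : Fin p → ℝ)
    (hfeas : ∀ k, 0 ≤ (C.mulVec hstar + f) k)
    (hopt : ∀ h : Fin p → ℝ, (∀ k, 0 ≤ (C.mulVec h + f) k) → evnorm hstar ≤ evnorm h)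
    (A : Finset (Fin n))
    (hA : ∀ k, k ∈ A ↔ (C.mulVec hstar + f) k = 0)
    (hR : ∀ k ∉ A, 0 < (C.mulVec hstar + f) k)
    (hrank : LinearIndependent ℝ fun a : A => (fun j => C a.1 j : Fin p → ℝ)) :
    evnorm (fun a : A => max (f a.1) 0) ≤
      specNorm (C.submatrix (Subtype.val : A → Fin n) id) *
        specNorm (C.submatrix (Subtype.val : A → Fin n) id)ᵀ *
        specNorm ((C.submatrix (Subtype.val : A → Fin n) id) *
          (C.submatrix (Subtype.val : A → Fin n) id)ᵀ)⁻¹ *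
        evnorm (fun a : A => max (-(f a.1)) 0) := by
  classical
  set B : Matrix A (Fin p) ℝ := C.submatrix (Subtype.val : A → Fin n) id with hBdef
  set M : Matrix A A ℝ := B * Bᵀ with hMdef
  -- generic identity
  have dotBBt : ∀ (x y : A → ℝ), x ⬝ᵥ (M *ᵥ y) = (Bᵀ *ᵥ x) ⬝ᵥ (Bᵀ *ᵥ y) := by
    intro x y
    rw [hMdef, ← Matrix.mulVec_mulVec, Matrix.dotProduct_mulVec, ← Matrix.mulVec_transpose]
  -- B acts like C on rows of A
  have hBC : ∀ (x : Fin p → ℝ) (a : A), (B *ᵥ x) a = (C *ᵥ x) a.1 := by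
    intro x a
    simp [hBdef, Matrix.mulVec, Matrix.submatrix, dotProduct]
  -- kernel of Bᵀ is trivial
  have hker : ∀ x : A → ℝ, Bᵀ *ᵥ x = 0 → x = 0 := by
    intro x hx
    have h0 : (∑ a : A, x a • (fun j => C a.1 j : Fin p → ℝ)) = 0 := by
      funext j
      have := congrFun hx j
      simpa [Matrix.mulVec, dotProduct, Matrix.transpose_apply, hBdef,
        Matrix.submatrix, Finset.sum_apply, mul_comm] using this
    funext a
    exact Fintype.linearIndependent_iff.1 hrank _ h0 a
  -- M is invertible
  have hdet : IsUnit M.det := by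
    rw [isUnit_iff_ne_zero]
    intro h0
    obtain ⟨v, hv, hMv⟩ := (Matrix.exists_mulVec_eq_zero_iff).2 h0
    have : v ⬝ᵥ (M *ᵥ v) = 0 := by rw [hMv, dotProduct_zero]
    rw [dotBBt] at this
    have hz : Bᵀ *ᵥ v = 0 := by
      have hsum : ∑ j, ((Bᵀ *ᵥ v) j) ^ 2 = 0 := by
        simpa [dotProduct, pow_two] using this
      funext j
      have := (Finset.sum_eq_zero_iff_of_nonneg
        (fun i _ => sq_nonneg ((Bᵀ *ᵥ v) i))).1 hsum j (Finset.mem_univ j)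
      exact pow_eq_zero_iff (n := 2) (by norm_num) |>.1 this
    exact hv (hker v hz)
  have hMMinv : M * M⁻¹ = 1 := Matrix.mul_nonsing_inv M hdet
  have hMinvT : M⁻¹ᵀ = M⁻¹ := by
    rw [Matrix.transpose_nonsing_inv]
    congr 1
    rw [hMdef, Matrix.transpose_mul, Matrix.transpose_transpose]
  -- the multiplier
  set lam : A → ℝ := M⁻¹ *ᵥ (B *ᵥ hstar) with hlamdef
  have hlam : ∀ a : A, 0 ≤ lam a := by
    intro a
    set d : Fin p → ℝ := Bᵀ *ᵥ (M⁻¹ *ᵥ Pi.single a 1) with hddef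
    have hBd : B *ᵥ d = Pi.single a 1 := by
      rw [hddef, Matrix.mulVec_mulVec, Matrix.mulVec_mulVec, ← hMdef,
        hMMinv, Matrix.one_mulVec]
    have hdot : hstar ⬝ᵥ d = lam a := by
      rw [hddef, Matrix.dotProduct_mulVec, Matrix.vecMul_transpose,
        Matrix.dotProduct_mulVec (B *ᵥ hstar) M⁻¹, ← Matrix.mulVec_transpose, hMinvT,
        ← hlamdef, dotProduct_single, mul_one]
    rw [← hdot]
    -- show 0 ≤ hstar ⬝ᵥ d by optimality
    by_contra hc
    push_neg at hc
    set c : ℝ := hstar ⬝ᵥ d with hcdef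
    set S : ℝ := ∑ j, d j ^ 2 with hSdef
    have hS : 0 ≤ S := Finset.sum_nonneg fun _ _ => sq_nonneg _
    haveI : Nonempty (Fin n) := ⟨a.1⟩
    set g : Fin n → ℝ := fun k =>
      if k ∈ A then 1 else (C *ᵥ hstar + f) k / (|(C *ᵥ d) k| + 1) with hgdef
    set t : ℝ := min (Finset.univ.inf' Finset.univ_nonempty g) (-c / (S + 1)) with htdef
    have hg : ∀ k, 0 < g k := by
      intro k
      by_cases hk : k ∈ A
      · simp [hgdef, hk]
      · have := hR k hk
        have habs : 0 < |(C *ᵥ d) k| + 1 := by positivity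
        simp only [hgdef, hk, if_false]
        positivity
    have ht0 : 0 < t := by
      apply lt_min
      · rw [Finset.lt_inf'_iff]
        exact fun k _ => hg k
      · apply div_pos (by linarith) (by linarith)
    have htg : ∀ k, t ≤ g k := fun k =>
      le_trans (min_le_left _ _) (Finset.inf'_le g (Finset.mem_univ k))
    have htc : t * (S + 1) ≤ -c := by
      have := min_le_right (Finset.univ.inf' Finset.univ_nonempty g) (-c / (S + 1))
      calc t * (S + 1) ≤ (-c / (S + 1)) * (S + 1) := by
            apply mul_le_mul_of_nonneg_right (le_trans le_rfl ?_) (by linarith)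
            exact this
        _ = -c := by field_simp
    -- feasibility of hstar + t • d
    have hfeas' : ∀ k, 0 ≤ (C *ᵥ (hstar + t • d) + f) k := by
      intro k
      have hexp : (C *ᵥ (hstar + t • d) + f) k
          = (C *ᵥ hstar + f) k + t * (C *ᵥ d) k := by
        simp [Matrix.mulVec_add, Matrix.mulVec_smul]
        ring
      rw [hexp]
      by_cases hk : k ∈ A
      · have h0 : (C *ᵥ hstar + f) k = 0 := (hA k).1 hk
        have hCd : (C *ᵥ d) k = ((Pi.single a (1:ℝ) : A → ℝ)) ⟨k, hk⟩ := by
          rw [← hBC d ⟨k, hk⟩, hBd]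
        have : (0:ℝ) ≤ ((Pi.single a (1:ℝ) : A → ℝ)) ⟨k, hk⟩ := by
          rcases eq_or_ne (⟨k, hk⟩ : A) a with h | h <;> simp [Pi.single_apply, h]
        rw [h0, hCd]
        positivity
      · have hP : 0 < (C *ᵥ hstar + f) k := hR k hk
        have htk : t ≤ (C *ᵥ hstar + f) k / (|(C *ᵥ d) k| + 1) := by
          have := htg k
          simpa [hgdef, hk] using this
        have habs : 0 < |(C *ᵥ d) k| + 1 := by positivity
        have h1 : t * (|(C *ᵥ d) k| + 1) ≤ (C *ᵥ hstar + f) k := by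
          rw [← le_div_iff₀ habs]; exact htk
        have h2 : -( |(C *ᵥ d) k| ) ≤ (C *ᵥ d) k := neg_abs_le _
        nlinarith [abs_nonneg ((C *ᵥ d) k), ht0.le]
    -- optimality gives a contradiction
    have hle := hopt _ hfeas'
    have hsq : (∑ j, hstar j ^ 2) ≤ ∑ j, (hstar + t • d) j ^ 2 := by
      have := pow_le_pow_left₀ (evnorm_nonneg' hstar) hle 2
      rwa [evnorm_sq, evnorm_sq] at this
    have hexp2 : ∑ j, (hstar + t • d) j ^ 2
        = (∑ j, hstar j ^ 2) + 2 * t * c + t ^ 2 * S := by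
      rw [hcdef, hSdef]
      simp only [dotProduct, Pi.add_apply, Pi.smul_apply, smul_eq_mul]
      rw [Finset.mul_sum, Finset.mul_sum, ← Finset.sum_add_distrib, ← Finset.sum_add_distrib]
      apply Finset.sum_congr rfl
      intros
      ring
    rw [hexp2] at hsq
    nlinarith [mul_pos ht0 ht0, mul_le_mul_of_nonneg_left htc ht0.le]
  -- Step C: the main estimate
  set u : A → ℝ := fun a => max (f a.1) 0 with hudef
  set w : A → ℝ := fun a => max (-(f a.1)) 0 with hwdef
  set fA : A → ℝ := fun a => f a.1 with hfAdef
  have hu0 : ∀ a, 0 ≤ u a := fun a => le_max_right _ _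
  have hfAuw : fA = u - w := by
    funext a
    simp only [hudef, hwdef, hfAdef, Pi.sub_apply]
    rcases le_total (f a.1) 0 with h | h
    · rw [max_eq_right h, max_eq_left (by linarith)]; ring
    · rw [max_eq_left h, max_eq_right (by linarith)]; ring
  have hBh : B *ᵥ hstar = -fA := by
    funext a
    have h0 : (C *ᵥ hstar + f) a.1 = 0 := (hA a.1).1 a.2
    have hb := hBC hstar a
    simp only [Pi.add_apply] at h0
    simp only [hb, hfAdef, Pi.neg_apply]
    linarith
  have huu2 : u ⬝ᵥ u = evnorm u ^ 2 := by
    rw [evnorm_sq]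
    simp [dotProduct, pow_two]
  have hMinvfA : M⁻¹ *ᵥ fA = -lam := by
    rw [hlamdef, hBh, Matrix.mulVec_neg, neg_neg]
  have h1 : u ⬝ᵥ (M⁻¹ *ᵥ fA) ≤ 0 := by
    rw [hMinvfA, dotProduct_neg, neg_nonpos]
    have : (0:ℝ) ≤ ∑ a, u a * lam a :=
      Finset.sum_nonneg fun a _ => mul_nonneg (hu0 a) (hlam a)
    simpa [dotProduct] using this
  have h2 : u ⬝ᵥ (M⁻¹ *ᵥ u) ≤ u ⬝ᵥ (M⁻¹ *ᵥ w) := by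
    rw [hfAuw, Matrix.mulVec_sub, dotProduct_sub] at h1
    linarith
  set x : A → ℝ := M⁻¹ *ᵥ u with hxdef
  have hMx : M *ᵥ x = u := by
    rw [hxdef, Matrix.mulVec_mulVec, hMMinv, Matrix.one_mulVec]
  have hxu : u ⬝ᵥ (M⁻¹ *ᵥ u) = x ⬝ᵥ (M *ᵥ x) := by
    rw [hMx]
    exact dotProduct_comm u x
  have hb2 : 0 ≤ u ⬝ᵥ (M⁻¹ *ᵥ u) := by
    rw [hxu, dotBBt]
    have : (0:ℝ) ≤ ∑ j, (Bᵀ *ᵥ x) j * (Bᵀ *ᵥ x) j :=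
      Finset.sum_nonneg fun j _ => mul_self_nonneg _
    simpa [dotProduct] using this
  have hMu0 : 0 ≤ u ⬝ᵥ (M *ᵥ u) := by
    rw [dotBBt]
    have : (0:ℝ) ≤ ∑ j, (Bᵀ *ᵥ u) j * (Bᵀ *ᵥ u) j :=
      Finset.sum_nonneg fun j _ => mul_self_nonneg _
    simpa [dotProduct] using this
  have huu : 0 ≤ u ⬝ᵥ u := by
    have : (0:ℝ) ≤ ∑ a, u a * u a := Finset.sum_nonneg fun a _ => mul_self_nonneg _
    simpa [dotProduct] using this
  have hCS : (u ⬝ᵥ u) ^ 2 ≤ (u ⬝ᵥ (M *ᵥ u)) * (u ⬝ᵥ (M⁻¹ *ᵥ u)) := by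
    have e1 : u ⬝ᵥ u ≤ evnorm (Bᵀ *ᵥ u) * evnorm (Bᵀ *ᵥ x) := by
      calc u ⬝ᵥ u = (Bᵀ *ᵥ u) ⬝ᵥ (Bᵀ *ᵥ x) := by rw [← dotBBt, hMx]
        _ ≤ _ := dot_le_evnorm _ _
    have e2 := pow_le_pow_left₀ huu e1 2
    calc (u ⬝ᵥ u) ^ 2 ≤ (evnorm (Bᵀ *ᵥ u) * evnorm (Bᵀ *ᵥ x)) ^ 2 := e2
      _ = evnorm (Bᵀ *ᵥ u) ^ 2 * evnorm (Bᵀ *ᵥ x) ^ 2 := by ring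
      _ = (u ⬝ᵥ (M *ᵥ u)) * (x ⬝ᵥ (M *ᵥ x)) := by
          rw [evnorm_sq, evnorm_sq, dotBBt u u, dotBBt x x]
          simp [dotProduct, pow_two]
      _ = (u ⬝ᵥ (M *ᵥ u)) * (u ⬝ᵥ (M⁻¹ *ᵥ u)) := by rw [hxu]
  have hevu : 0 ≤ evnorm u := evnorm_nonneg' u
  have hsm : specNorm M ≤ specNorm B * specNorm Bᵀ := by
    rw [hMdef]; exact specNorm_mul_le B Bᵀ
  have hb1 : u ⬝ᵥ (M *ᵥ u) ≤ specNorm B * specNorm Bᵀ * evnorm u ^ 2 := by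
    calc u ⬝ᵥ (M *ᵥ u) ≤ evnorm u * evnorm (M *ᵥ u) := dot_le_evnorm _ _
      _ ≤ evnorm u * (specNorm M * evnorm u) :=
          mul_le_mul_of_nonneg_left (evnorm_mulVec_le M u) hevu
      _ ≤ evnorm u * (specNorm B * specNorm Bᵀ * evnorm u) :=
          mul_le_mul_of_nonneg_left (mul_le_mul_of_nonneg_right hsm hevu) hevu
      _ = specNorm B * specNorm Bᵀ * evnorm u ^ 2 := by ring
  have hb3 : u ⬝ᵥ (M⁻¹ *ᵥ w) ≤ evnorm u * (specNorm M⁻¹ * evnorm w) := by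
    calc u ⬝ᵥ (M⁻¹ *ᵥ w) ≤ evnorm u * evnorm (M⁻¹ *ᵥ w) := dot_le_evnorm _ _
      _ ≤ _ := mul_le_mul_of_nonneg_left (evnorm_mulVec_le _ w) hevu
  have hW0 : 0 ≤ evnorm w := evnorm_nonneg' w
  have hMw0 : 0 ≤ u ⬝ᵥ (M⁻¹ *ᵥ w) := le_trans hb2 h2
  have step1 : evnorm u ^ 4 ≤ (u ⬝ᵥ (M *ᵥ u)) * (u ⬝ᵥ (M⁻¹ *ᵥ w)) := by
    calc evnorm u ^ 4 = (u ⬝ᵥ u) ^ 2 := by rw [huu2]; ring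
      _ ≤ (u ⬝ᵥ (M *ᵥ u)) * (u ⬝ᵥ (M⁻¹ *ᵥ u)) := hCS
      _ ≤ (u ⬝ᵥ (M *ᵥ u)) * (u ⬝ᵥ (M⁻¹ *ᵥ w)) := mul_le_mul_of_nonneg_left h2 hMu0
  have hsBn : 0 ≤ specNorm B := specNorm_nonneg B
  have hsBtn : 0 ≤ specNorm Bᵀ := specNorm_nonneg Bᵀ
  have hsMin : 0 ≤ specNorm M⁻¹ := specNorm_nonneg M⁻¹
  have step2 : evnorm u ^ 4 ≤
      specNorm B * specNorm Bᵀ * specNorm M⁻¹ * evnorm w * evnorm u ^ 3 := by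
    calc evnorm u ^ 4 ≤ (u ⬝ᵥ (M *ᵥ u)) * (u ⬝ᵥ (M⁻¹ *ᵥ w)) := step1
      _ ≤ (specNorm B * specNorm Bᵀ * evnorm u ^ 2) * (u ⬝ᵥ (M⁻¹ *ᵥ w)) :=
          mul_le_mul_of_nonneg_right hb1 hMw0
      _ ≤ (specNorm B * specNorm Bᵀ * evnorm u ^ 2)
            * (evnorm u * (specNorm M⁻¹ * evnorm w)) := by
          apply mul_le_mul_of_nonneg_left hb3
          positivity
      _ = specNorm B * specNorm Bᵀ * specNorm M⁻¹ * evnorm w * evnorm u ^ 3 := by ring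
  rcases eq_or_lt_of_le hevu with h | h
  · rw [← h]
    positivity
  · have h4 : evnorm u * evnorm u ^ 3 ≤
        specNorm B * specNorm Bᵀ * specNorm M⁻¹ * evnorm w * evnorm u ^ 3 := by
      calc evnorm u * evnorm u ^ 3 = evnorm u ^ 4 := by ring
        _ ≤ _ := step2
    exact le_of_mul_le_mul_right h4 (pow_pos h 3)

end
end
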